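/- arXiv:1712.07865 — 3 statements merged into one kernel-verified Lean document; each statement's English description precedes it below -/
import Mathlib

section
/- Let F be a Finsler metric with fundamental tensor g_{ij}, β = b_i y^i a 1-form, and F̄ = (F+β)²/F + β (square–Randers change). Then ḡ_{ij} = (1 + 3β/F − 3β³/F³ − β⁴/F⁴) g_{ij} + (3 − 4β³/F³ − 9β²/F²)(b_i F_{y^j} + b_j F_{y^i}) + (−3β/F + 9β³/F³ + 4β⁴/F⁴) F_{y^i} F_{y^j} + (11 + 18β/F + 6β²/F²) b_i b_j. -/
open scoped BigOperators

/-- Partial derivative in the fiber variable `y^i`. -/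
noncomputable def d1 {n : ℕ} (f : (Fin n → ℝ) → ℝ) (i : Fin n) (y : Fin n → ℝ) : ℝ :=
  fderiv ℝ f y (Pi.single i 1)

/-- Second partial derivative in the fiber variables `y^i`, `y^j`. -/
noncomputable def d2 {n : ℕ} (f : (Fin n → ℝ) → ℝ) (i j : Fin n) (y : Fin n → ℝ) : ℝ :=
  d1 (d1 f i) j y

/-- The 1-form `β(y) = b_i y^i`. -/
noncomputable def lform {n : ℕ} (b : Fin n → ℝ) (y : Fin n → ℝ) : ℝ := ∑ i, b i * y i

noncomputable def lformCLM {n : ℕ} (b : Fin n → ℝ) : (Fin n → ℝ) →L[ℝ] ℝ :=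
  ∑ i, b i • ContinuousLinearMap.proj i
lemma lformCLM_apply {n : ℕ} (b : Fin n → ℝ) (k : Fin n) :
    lformCLM b (Pi.single k 1) = b k := by
  simp [lformCLM, ContinuousLinearMap.sum_apply, Pi.single_apply, mul_ite, Finset.sum_ite_eq']
lemma lform_hasFDerivAt {n : ℕ} (b : Fin n → ℝ) (y : Fin n → ℝ) :
    HasFDerivAt (lform b) (lformCLM b) y := by
  have : ∀ i ∈ (Finset.univ : Finset (Fin n)),
      HasFDerivAt (fun y : Fin n → ℝ => b i * y i)
        (b i • (ContinuousLinearMap.proj i : (Fin n → ℝ) →L[ℝ] ℝ)) y := fun i _ =>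
    ((ContinuousLinearMap.proj i : (Fin n → ℝ) →L[ℝ] ℝ).hasFDerivAt).const_mul (b i)
  exact HasFDerivAt.fun_sum this

lemma bar_hasFDerivAt {n : ℕ} (F : (Fin n → ℝ) → ℝ) (b : Fin n → ℝ)
    (hF : ContDiff ℝ (⊤ : ℕ∞) F) (hFpos : ∀ y, 0 < F y) (y : Fin n → ℝ) :
    HasFDerivAt (fun y => (F y + lform b y) ^ 2 / F y + lform b y)
      ((2 * (F y + lform b y) * (F y)⁻¹
          - (F y + lform b y) * (F y + lform b y) * ((F y)⁻¹ * (F y)⁻¹)) •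
            (fderiv ℝ F y)
        + (2 * (F y + lform b y) * (F y)⁻¹ + 1) • lformCLM b) y := by
  have hne : F y ≠ 0 := (hFpos y).ne'
  have hFy : HasFDerivAt F (fderiv ℝ F y) y := (hF.differentiable (by simp) y).hasFDerivAt
  have hLy := lform_hasFDerivAt b y
  have hA : HasFDerivAt (fun y => F y + lform b y) (fderiv ℝ F y + lformCLM b) y :=
    hFy.add hLy
  have hinv : HasFDerivAt (fun y => (F y)⁻¹) ((-((F y) ^ 2)⁻¹) • fderiv ℝ F y) y :=
    (hasDerivAt_inv hne).comp_hasFDerivAt y hFy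
  have h1 : HasFDerivAt (fun y => (F y + lform b y) * (F y + lform b y) * (F y)⁻¹ + lform b y)
      (((F y + lform b y) * (F y + lform b y)) • ((-((F y) ^ 2)⁻¹) • fderiv ℝ F y)
        + (F y)⁻¹ • ((F y + lform b y) • (fderiv ℝ F y + lformCLM b)
            + (F y + lform b y) • (fderiv ℝ F y + lformCLM b))
        + lformCLM b) y := ((hA.mul hA).mul hinv).add hLy
  have heq : (fun y => (F y + lform b y) ^ 2 / F y + lform b y)
      = fun y => (F y + lform b y) * (F y + lform b y) * (F y)⁻¹ + lform b y := by
    funext z; ring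
  rw [heq]
  convert h1 using 1
  ext v
  simp only [ContinuousLinearMap.add_apply, ContinuousLinearMap.smul_apply, smul_eq_mul]
  field_simp
  ring

lemma d1_bar {n : ℕ} (F : (Fin n → ℝ) → ℝ) (b : Fin n → ℝ)
    (hF : ContDiff ℝ (⊤ : ℕ∞) F) (hFpos : ∀ y, 0 < F y) (k : Fin n) (y : Fin n → ℝ) :
    d1 (fun y => (F y + lform b y) ^ 2 / F y + lform b y) k y
      = (2 * (F y + lform b y) * (F y)⁻¹
          - (F y + lform b y) * (F y + lform b y) * ((F y)⁻¹ * (F y)⁻¹)) * d1 F k y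
        + (2 * (F y + lform b y) * (F y)⁻¹ + 1) * b k := by
  have h := (bar_hasFDerivAt F b hF hFpos y).fderiv
  simp only [d1, h, ContinuousLinearMap.add_apply, ContinuousLinearMap.smul_apply,
    smul_eq_mul, lformCLM_apply]

set_option maxHeartbeats 2000000 in
/-- Fundamental tensor of the square–Randers change `F̄ = (F+β)²/F + β`. -/
theorem squareRanders_fundamental_tensor {n : ℕ} (F : (Fin n → ℝ) → ℝ) (b : Fin n → ℝ)
    (hF : ContDiff ℝ (⊤ : ℕ∞) F) (hFpos : ∀ y, 0 < F y) (y0 : Fin n → ℝ) :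
    ∀ i j : Fin n,
      (fun y => (F y + lform b y) ^ 2 / F y + lform b y) y0 *
          d2 (fun y => (F y + lform b y) ^ 2 / F y + lform b y) i j y0 +
        d1 (fun y => (F y + lform b y) ^ 2 / F y + lform b y) i y0 *
          d1 (fun y => (F y + lform b y) ^ 2 / F y + lform b y) j y0 =
      (1 + 3 * lform b y0 / F y0 - 3 * (lform b y0) ^ 3 / (F y0) ^ 3
            - (lform b y0) ^ 4 / (F y0) ^ 4) *
          (F y0 * d2 F i j y0 + d1 F i y0 * d1 F j y0)
        + (3 - 4 * (lform b y0) ^ 3 / (F y0) ^ 3 - 9 * (lform b y0) ^ 2 / (F y0) ^ 2) *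
          (b i * d1 F j y0 + b j * d1 F i y0)
        + (-(3 * lform b y0 / F y0) + 9 * (lform b y0) ^ 3 / (F y0) ^ 3
            + 4 * (lform b y0) ^ 4 / (F y0) ^ 4) *
          (d1 F i y0 * d1 F j y0)
        + (11 + 18 * lform b y0 / F y0 + 6 * (lform b y0) ^ 2 / (F y0) ^ 2) *
          (b i * b j) := by
  intro i j
  have hne : F y0 ≠ 0 := (hFpos y0).ne'
  have hFdiff : Differentiable ℝ F := hF.differentiable (by simp)
  have hFy : HasFDerivAt F (fderiv ℝ F y0) y0 := (hFdiff y0).hasFDerivAt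
  have hLy := lform_hasFDerivAt b y0
  have hA : HasFDerivAt (fun y => F y + lform b y) (fderiv ℝ F y0 + lformCLM b) y0 :=
    hFy.add hLy
  have hinv : HasFDerivAt (fun y => (F y)⁻¹) ((-((F y0) ^ 2)⁻¹) • fderiv ℝ F y0) y0 :=
    (hasDerivAt_inv hne).comp_hasFDerivAt y0 hFy
  -- the function gi = d1 F i is differentiable
  set gi : (Fin n → ℝ) → ℝ := fun y => fderiv ℝ F y (Pi.single i 1) with hgi_def
  have hH : Differentiable ℝ (fderiv ℝ F) :=
    (hF.fderiv_right (m := 1) (WithTop.coe_le_coe.mpr le_top)).differentiable (by simp)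
  have hgidiff : Differentiable ℝ gi :=
    (ContinuousLinearMap.apply ℝ ℝ (Pi.single i 1 : Fin n → ℝ)).differentiable.comp hH
  have hgi : HasFDerivAt gi (fderiv ℝ gi y0) y0 := (hgidiff y0).hasFDerivAt
  -- second derivative of the bar metric
  have hP := (hA.const_mul (2:ℝ)).fun_mul hinv
  have hQ := (hA.fun_mul hA).fun_mul (hinv.fun_mul hinv)
  have hG := ((hP.fun_sub hQ).fun_mul hgi).fun_add ((hP.add_const (1:ℝ)).mul_const (b i))
  have hd1fun : d1 (fun y => (F y + lform b y) ^ 2 / F y + lform b y) i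
      = fun y => (2 * (F y + lform b y) * (F y)⁻¹
          - (F y + lform b y) * (F y + lform b y) * ((F y)⁻¹ * (F y)⁻¹)) * gi y
        + (2 * (F y + lform b y) * (F y)⁻¹ + 1) * b i := by
    funext z
    exact d1_bar F b hF hFpos i z
  have hd2bar : d2 (fun y => (F y + lform b y) ^ 2 / F y + lform b y) i j y0
      = (fderiv ℝ (fun y => (2 * (F y + lform b y) * (F y)⁻¹
          - (F y + lform b y) * (F y + lform b y) * ((F y)⁻¹ * (F y)⁻¹)) * gi y
        + (2 * (F y + lform b y) * (F y)⁻¹ + 1) * b i) y0) (Pi.single j 1) := by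
    rw [d2, d1, hd1fun]
  rw [hd2bar, hG.fderiv]
  have hd2F : fderiv ℝ gi y0 (Pi.single j 1) = d2 F i j y0 := rfl
  have hdF : ∀ k, (fderiv ℝ F y0) (Pi.single k 1) = d1 F k y0 := fun k => rfl
  have hgival : gi y0 = d1 F i y0 := rfl
  rw [d1_bar F b hF hFpos i y0, d1_bar F b hF hFpos j y0]
  simp only [ContinuousLinearMap.add_apply, ContinuousLinearMap.smul_apply,
    ContinuousLinearMap.sub_apply, smul_eq_mul, lformCLM_apply, hd2F, hdF, hgival]
  field_simp
  ring
end

section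
/- Let F be a Finsler metric with fundamental tensor g_{ij}, β = b_i y^i a 1-form, and F̄ = F e^{β/F} + β (exponential–Randers change). Then ḡ_{ij} = (e^{β/F} + β/F) e^{β/F}(1 − β/F) g_{ij} − e^{β/F}{−1 + β/F + β²/F² + (−1 + 2β/F)e^{β/F}}(b_i F_{y^j} + b_j F_{y^i}) + (β/F) e^{β/F}{−1 + β/F + β²/F² + (−1 + 2β/F)e^{β/F}} F_{y^i} F_{y^j} + {1 + 2e^{2β/F} + (2 + β/F)e^{β/F}} b_i b_j. -/
open scoped BigOperators

/-- Derivative functional of `lform b`. -/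
noncomputable def Mβ {n : ℕ} (b : Fin n → ℝ) : (Fin n → ℝ) →L[ℝ] ℝ :=
  ∑ k, b k • ContinuousLinearMap.proj k

lemma hasFDerivAt_lform {n : ℕ} (b : Fin n → ℝ) (y : Fin n → ℝ) :
    HasFDerivAt (lform b) (Mβ b) y := by
  unfold lform Mβ
  exact HasFDerivAt.fun_sum fun k _ =>
    ((ContinuousLinearMap.proj k : (Fin n → ℝ) →L[ℝ] ℝ).hasFDerivAt).const_mul (b k)

lemma Mβ_apply {n : ℕ} (b : Fin n → ℝ) (i : Fin n) : Mβ b (Pi.single i 1) = b i := by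
  simp [Mβ, Pi.single_apply]

lemma d1_eq_of {n : ℕ} {f : (Fin n → ℝ) → ℝ} {L : (Fin n → ℝ) →L[ℝ] ℝ} {y : Fin n → ℝ}
    (h : HasFDerivAt f L y) (i : Fin n) : d1 f i y = L (Pi.single i 1) := by
  rw [d1, h.fderiv]

lemma contDiff_d1 {n : ℕ} (F : (Fin n → ℝ) → ℝ) (hF : ContDiff ℝ (⊤ : ℕ∞) F) (i : Fin n) :
    ContDiff ℝ (⊤ : ℕ∞) (d1 F i) := by
  have h1 : ContDiff ℝ (⊤ : ℕ∞) (fderiv ℝ F) := hF.fderiv_right (by simp)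
  exact (ContinuousLinearMap.apply ℝ ℝ (Pi.single i 1)).contDiff.comp h1

lemma dFbar {n : ℕ} (F : (Fin n → ℝ) → ℝ) (b : Fin n → ℝ)
    (hF : ContDiff ℝ (⊤ : ℕ∞) F) (hFpos : ∀ y, 0 < F y) (i : Fin n) :
    d1 (fun y => F y * Real.exp (lform b y / F y) + lform b y) i = fun y =>
      Real.exp (lform b y / F y) * ((1 - lform b y / F y) * d1 F i y + b i) + b i := by
  funext y
  have hFy : F y ≠ 0 := (hFpos y).ne'
  have hFd : HasFDerivAt F (fderiv ℝ F y) y := (hF.differentiable (by simp) y).hasFDerivAt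
  have hβ := hasFDerivAt_lform b y
  have hinv : HasFDerivAt (fun z => (F z)⁻¹) ((-((F y) ^ 2)⁻¹) • fderiv ℝ F y) y :=
    (hasDerivAt_inv hFy).comp_hasFDerivAt y hFd
  have hs : HasFDerivAt (fun z => lform b z / F z)
      (lform b y • ((-((F y) ^ 2)⁻¹) • fderiv ℝ F y) + (F y)⁻¹ • Mβ b) y := by
    simp only [div_eq_mul_inv]; exact hβ.mul hinv
  have htot := (hFd.fun_mul hs.exp).fun_add hβ
  rw [d1_eq_of htot]
  have ha : fderiv ℝ F y (Pi.single i 1) = d1 F i y := rfl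
  simp only [ContinuousLinearMap.add_apply, ContinuousLinearMap.smul_apply, smul_eq_mul,
    Mβ_apply, ha]
  field_simp
  ring

/-- Fundamental tensor of the exponential–Randers change `F̄ = F e^{β/F} + β`. -/
theorem expRanders_fundamental_tensor {n : ℕ} (F : (Fin n → ℝ) → ℝ) (b : Fin n → ℝ)
    (hF : ContDiff ℝ (⊤ : ℕ∞) F) (hFpos : ∀ y, 0 < F y) (y0 : Fin n → ℝ) :
    ∀ i j : Fin n,
      (fun y => F y * Real.exp (lform b y / F y) + lform b y) y0 *
          d2 (fun y => F y * Real.exp (lform b y / F y) + lform b y) i j y0 +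
        d1 (fun y => F y * Real.exp (lform b y / F y) + lform b y) i y0 *
          d1 (fun y => F y * Real.exp (lform b y / F y) + lform b y) j y0 =
      (Real.exp (lform b y0 / F y0) + lform b y0 / F y0) * Real.exp (lform b y0 / F y0) *
          (1 - lform b y0 / F y0) *
          (F y0 * d2 F i j y0 + d1 F i y0 * d1 F j y0)
        - Real.exp (lform b y0 / F y0) *
          (-1 + lform b y0 / F y0 + (lform b y0) ^ 2 / (F y0) ^ 2
            + (-1 + 2 * lform b y0 / F y0) * Real.exp (lform b y0 / F y0)) *
          (b i * d1 F j y0 + b j * d1 F i y0)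
        + (lform b y0 / F y0) * Real.exp (lform b y0 / F y0) *
          (-1 + lform b y0 / F y0 + (lform b y0) ^ 2 / (F y0) ^ 2
            + (-1 + 2 * lform b y0 / F y0) * Real.exp (lform b y0 / F y0)) *
          (d1 F i y0 * d1 F j y0)
        + (1 + 2 * Real.exp (2 * lform b y0 / F y0)
            + (2 + lform b y0 / F y0) * Real.exp (lform b y0 / F y0)) *
          (b i * b j) := by
  intro i j
  have hA := dFbar F b hF hFpos
  have hFy : F y0 ≠ 0 := (hFpos y0).ne'
  have hFd : HasFDerivAt F (fderiv ℝ F y0) y0 := (hF.differentiable (by simp) y0).hasFDerivAt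
  have hβ := hasFDerivAt_lform b y0
  have hinv : HasFDerivAt (fun z => (F z)⁻¹) ((-((F y0) ^ 2)⁻¹) • fderiv ℝ F y0) y0 :=
    (hasDerivAt_inv hFy).comp_hasFDerivAt y0 hFd
  have hs : HasFDerivAt (fun z => lform b z / F z)
      (lform b y0 • ((-((F y0) ^ 2)⁻¹) • fderiv ℝ F y0) + (F y0)⁻¹ • Mβ b) y0 := by
    simp only [div_eq_mul_inv]; exact hβ.mul hinv
  have hN : HasFDerivAt (d1 F i) (fderiv ℝ (d1 F i) y0) y0 :=
    ((contDiff_d1 F hF i).differentiable (by simp) y0).hasFDerivAt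
  have hG := ((hs.exp).fun_mul (((hs.const_sub 1).fun_mul hN).add_const (b i))).add_const (b i)
  simp only [d2]
  rw [hA i, hA j]
  rw [d1_eq_of hG j]
  have hFi : fderiv ℝ F y0 (Pi.single i 1) = d1 F i y0 := rfl
  have hFj : fderiv ℝ F y0 (Pi.single j 1) = d1 F j y0 := rfl
  have hFij : fderiv ℝ (d1 F i) y0 (Pi.single j 1) = d1 (d1 F i) j y0 := rfl
  simp only [ContinuousLinearMap.add_apply, ContinuousLinearMap.smul_apply,
    ContinuousLinearMap.neg_apply, smul_eq_mul, Mβ_apply, hFi, hFj, hFij]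
  rw [show 2 * lform b y0 / F y0 = lform b y0 / F y0 + lform b y0 / F y0 by ring,
    Real.exp_add]
  field_simp
  ring
end

section
/- With A = a_{ij}(x)y^i y^j, β = b_i(x)y^i smooth, A > 0, let F̄ = √A e^{β/√A} + β (exponential–Randers change). If A₀A_ℓ = 0, A_{0ℓ} = A_{x^ℓ}, β₀β_ℓ = 0, β_{0ℓ} = β_{x^ℓ}, and A_ℓβ₀ + A₀β_ℓ = 0 for all ℓ, then F̄ satisfies Hamel's equation F̄_{x^k y^ℓ}y^k − F̄_{x^ℓ} = 0, i.e. F̄ is projectively flat. -/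
open scoped BigOperators

/-- Partial derivative in the base variable `x^k`. -/
noncomputable def pdx {n : ℕ} (f : (Fin n → ℝ) → (Fin n → ℝ) → ℝ) (k : Fin n)
    (x y : Fin n → ℝ) : ℝ := fderiv ℝ (fun x' => f x' y) x (Pi.single k 1)

/-- Partial derivative in the fiber variable `y^l`. -/
noncomputable def pdy {n : ℕ} (f : (Fin n → ℝ) → (Fin n → ℝ) → ℝ) (l : Fin n)
    (x y : Fin n → ℝ) : ℝ := fderiv ℝ (fun y' => f x y') y (Pi.single l 1)

/-- `f_0 = f_{x^k} y^k` (sum over `k`). -/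
noncomputable def der0 {n : ℕ} (f : (Fin n → ℝ) → (Fin n → ℝ) → ℝ)
    (x y : Fin n → ℝ) : ℝ := ∑ k, pdx f k x y * y k

/-- `f_{0l} = f_{x^k y^l} y^k` (sum over `k`). -/
noncomputable def der0l {n : ℕ} (f : (Fin n → ℝ) → (Fin n → ℝ) → ℝ) (l : Fin n)
    (x y : Fin n → ℝ) : ℝ := ∑ k, pdy (pdx f k) l x y * y k

/-- The Riemannian quadratic form `A(x,y) = a_{ij}(x) y^i y^j`. -/
noncomputable def quadA {n : ℕ} (a : (Fin n → ℝ) → Fin n → Fin n → ℝ)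
    (x y : Fin n → ℝ) : ℝ := ∑ i, ∑ j, a x i j * y i * y j

/-- The 1-form `β(x,y) = b_i(x) y^i`. -/
noncomputable def oneform {n : ℕ} (b : (Fin n → ℝ) → Fin n → ℝ)
    (x y : Fin n → ℝ) : ℝ := ∑ i, b x i * y i

/-! ### Auxiliary coefficient functions -/

noncomputable def co2 (u v : ℝ) : ℝ :=
  Real.exp (v / Real.sqrt u) * (1 / (2 * Real.sqrt u) - v / (2 * u))

noncomputable def co4 (u v : ℝ) : ℝ := Real.exp (v / Real.sqrt u) + 1

noncomputable def co3 (u v ul vl : ℝ) : ℝ :=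
  Real.exp (v / Real.sqrt u) * (vl / Real.sqrt u - v * ul / (2 * Real.sqrt u * u))

noncomputable def co1 (u v ul vl : ℝ) : ℝ :=
  co3 u v ul vl * (1 / (2 * Real.sqrt u) - v / (2 * u))
    + Real.exp (v / Real.sqrt u) *
      (-(ul / (4 * Real.sqrt u * u)) - (vl * u - v * ul) / (2 * u ^ 2))

/-! ### Chain rule lemmas -/

lemma shape1 {E : Type*} [NormedAddCommGroup E] [NormedSpace ℝ E]
    {U V : E → ℝ} {x : E} (w : E)
    (hU : DifferentiableAt ℝ U x) (hV : DifferentiableAt ℝ V x) (hpos : 0 < U x) :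
    fderiv ℝ (fun z => Real.sqrt (U z) * Real.exp (V z / Real.sqrt (U z)) + V z) x w
      = co2 (U x) (V x) * fderiv ℝ U x w + co4 (U x) (V x) * fderiv ℝ V x w := by
  have hUne : U x ≠ 0 := ne_of_gt hpos
  have hs_pos : 0 < Real.sqrt (U x) := Real.sqrt_pos.mpr hpos
  have hsne : Real.sqrt (U x) ≠ 0 := ne_of_gt hs_pos
  have hss : Real.sqrt (U x) * Real.sqrt (U x) = U x := Real.mul_self_sqrt hpos.le
  have hs : HasFDerivAt (fun z => Real.sqrt (U z))
      ((1 / (2 * Real.sqrt (U x))) • fderiv ℝ U x) x :=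
    (Real.hasDerivAt_sqrt hUne).comp_hasFDerivAt x hU.hasFDerivAt
  have hinv : HasFDerivAt (fun z => (Real.sqrt (U z))⁻¹)
      ((-(Real.sqrt (U x) ^ 2)⁻¹) • ((1 / (2 * Real.sqrt (U x))) • fderiv ℝ U x)) x :=
    (hasDerivAt_inv hsne).comp_hasFDerivAt x hs
  have hq : HasFDerivAt (fun z => V z / Real.sqrt (U z))
      (V x • ((-(Real.sqrt (U x) ^ 2)⁻¹) • ((1 / (2 * Real.sqrt (U x))) • fderiv ℝ U x))
        + (Real.sqrt (U x))⁻¹ • fderiv ℝ V x) x := by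
    simpa only [div_eq_mul_inv, smul_eq_mul] using hV.hasFDerivAt.fun_mul hinv
  have he := (Real.hasDerivAt_exp (V x / Real.sqrt (U x))).comp_hasFDerivAt x hq
  have htot := (hs.fun_mul he).fun_add hV.hasFDerivAt
  simp only [Function.comp_def] at htot
  rw [htot.fderiv]
  simp only [ContinuousLinearMap.add_apply, ContinuousLinearMap.smul_apply,
    ContinuousLinearMap.sub_apply, smul_eq_mul, co2, co4]
  have h2 : U x = Real.sqrt (U x) * Real.sqrt (U x) := hss.symm
  rw [h2] at hpos ⊢
  set s := Real.sqrt (U x)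
  field_simp
  rw [Real.sqrt_sq hs_pos.le]
  ring

set_option maxHeartbeats 2000000 in
lemma shape2 {E : Type*} [NormedAddCommGroup E] [NormedSpace ℝ E]
    {U V P Q : E → ℝ} {x : E} (w : E)
    (hU : DifferentiableAt ℝ U x) (hV : DifferentiableAt ℝ V x)
    (hP : DifferentiableAt ℝ P x) (hQ : DifferentiableAt ℝ Q x) (hpos : 0 < U x) :
    fderiv ℝ (fun z => co2 (U z) (V z) * P z + co4 (U z) (V z) * Q z) x w
      = co1 (U x) (V x) (fderiv ℝ U x w) (fderiv ℝ V x w) * P x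
        + co2 (U x) (V x) * fderiv ℝ P x w
        + co3 (U x) (V x) (fderiv ℝ U x w) (fderiv ℝ V x w) * Q x
        + co4 (U x) (V x) * fderiv ℝ Q x w := by
  have hUne : U x ≠ 0 := ne_of_gt hpos
  have hs_pos : 0 < Real.sqrt (U x) := Real.sqrt_pos.mpr hpos
  have hsne : Real.sqrt (U x) ≠ 0 := ne_of_gt hs_pos
  have hss : Real.sqrt (U x) * Real.sqrt (U x) = U x := Real.mul_self_sqrt hpos.le
  have hs : HasFDerivAt (fun z => Real.sqrt (U z))
      ((1 / (2 * Real.sqrt (U x))) • fderiv ℝ U x) x :=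
    (Real.hasDerivAt_sqrt hUne).comp_hasFDerivAt x hU.hasFDerivAt
  have hinv := (hasDerivAt_inv hsne).comp_hasFDerivAt x hs
  have hq := hV.hasFDerivAt.fun_mul hinv
  have he := (Real.hasDerivAt_exp (V x * (Real.sqrt (U x))⁻¹)).comp_hasFDerivAt x hq
  simp only [Function.comp_def] at he
  have h2sne : 2 * Real.sqrt (U x) ≠ 0 := by positivity
  have h2une : 2 * U x ≠ 0 := by positivity
  have h1a := (hasDerivAt_inv h2sne).comp_hasFDerivAt x (hs.const_mul 2)
  have h1b := hV.hasFDerivAt.fun_mul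
    ((hasDerivAt_inv h2une).comp_hasFDerivAt x (hU.hasFDerivAt.const_mul 2))
  have hbig := ((he.fun_mul (h1a.fun_sub h1b)).fun_mul hP.hasFDerivAt).fun_add
    ((he.add_const 1).fun_mul hQ.hasFDerivAt)
  simp only [Function.comp_def] at hbig
  simp only [co2, co4, div_eq_mul_inv, one_mul, one_div]
  rw [hbig.fderiv]
  simp only [ContinuousLinearMap.add_apply, ContinuousLinearMap.smul_apply,
    ContinuousLinearMap.sub_apply, ContinuousLinearMap.neg_apply, smul_eq_mul,
    co1, co2, co3, co4]
  have h2 : U x = Real.sqrt (U x) * Real.sqrt (U x) := hss.symm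
  rw [h2] at hpos ⊢
  set s := Real.sqrt (U x)
  field_simp
  rw [Real.sqrt_sq hs_pos.le]
  ring

/-! ### Polynomial lemmas -/

lemma diff_qpoly {n : ℕ} (c : Fin n → Fin n → ℝ) :
    Differentiable ℝ (fun y : Fin n → ℝ => ∑ i, ∑ j, c i j * y i * y j) := by
  fun_prop

lemma diff_lpoly {n : ℕ} (d : Fin n → ℝ) :
    Differentiable ℝ (fun y : Fin n → ℝ => ∑ i, d i * y i) := by
  fun_prop

lemma fderiv_lpoly {n : ℕ} (d : Fin n → ℝ) (y : Fin n → ℝ) (l : Fin n) :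
    fderiv ℝ (fun y : Fin n → ℝ => ∑ i, d i * y i) y (Pi.single l 1) = d l := by
  have h : HasFDerivAt (fun y : Fin n → ℝ => ∑ i, d i * y i)
      (∑ i, d i • (ContinuousLinearMap.proj (R := ℝ) (φ := fun _ : Fin n => ℝ) i)) y :=
    HasFDerivAt.fun_sum fun i _ =>
      ((ContinuousLinearMap.proj (R := ℝ) (φ := fun _ : Fin n => ℝ) i).hasFDerivAt).const_mul (d i)
  rw [h.fderiv]
  simp [ContinuousLinearMap.proj_apply, Pi.single_apply, Finset.sum_ite_eq', mul_ite]

lemma pdy_oneform {n : ℕ} (b : (Fin n → ℝ) → Fin n → ℝ) (l : Fin n) (x y : Fin n → ℝ) :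
    pdy (oneform b) l x y = b x l := by
  rw [pdy]
  exact fderiv_lpoly (b x) y l

lemma pdx_quadA {n : ℕ} (a : (Fin n → ℝ) → Fin n → Fin n → ℝ)
    (ha : ∀ i j, ContDiff ℝ (⊤ : ℕ∞) (fun x => a x i j)) (k : Fin n) (x y : Fin n → ℝ) :
    pdx (quadA a) k x y
      = ∑ i, ∑ j, (fderiv ℝ (fun x' => a x' i j) x (Pi.single k 1)) * y i * y j := by
  have h : ∀ i j, HasFDerivAt (fun x' => a x' i j * y i * y j)
      ((y i * y j) • fderiv ℝ (fun x' => a x' i j) x) x := by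
    intro i j
    have := (((ha i j).differentiable (by simp) x).hasFDerivAt).mul_const (y i * y j)
    simpa [mul_assoc] using this
  have htot : HasFDerivAt (fun x' => ∑ i, ∑ j, a x' i j * y i * y j)
      (∑ i, ∑ j, (y i * y j) • fderiv ℝ (fun x' => a x' i j) x) x :=
    HasFDerivAt.fun_sum fun i _ => HasFDerivAt.fun_sum fun j _ => h i j
  rw [pdx, show (fun x' => quadA a x' y) = fun x' => ∑ i, ∑ j, a x' i j * y i * y j from rfl,
    htot.fderiv]
  simp only [ContinuousLinearMap.sum_apply, ContinuousLinearMap.smul_apply, smul_eq_mul]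
  exact Finset.sum_congr rfl fun i _ => Finset.sum_congr rfl fun j _ => by ring

lemma pdx_oneform {n : ℕ} (b : (Fin n → ℝ) → Fin n → ℝ)
    (hb : ∀ i, ContDiff ℝ (⊤ : ℕ∞) (fun x => b x i)) (k : Fin n) (x y : Fin n → ℝ) :
    pdx (oneform b) k x y = ∑ i, (fderiv ℝ (fun x' => b x' i) x (Pi.single k 1)) * y i := by
  have h : ∀ i, HasFDerivAt (fun x' => b x' i * y i)
      ((y i) • fderiv ℝ (fun x' => b x' i) x) x := fun i =>
    (((hb i).differentiable (by simp) x).hasFDerivAt).mul_const (y i)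
  have htot : HasFDerivAt (fun x' => ∑ i, b x' i * y i)
      (∑ i, (y i) • fderiv ℝ (fun x' => b x' i) x) x := HasFDerivAt.fun_sum fun i _ => h i
  rw [pdx, show (fun x' => oneform b x' y) = fun x' => ∑ i, b x' i * y i from rfl, htot.fderiv]
  simp only [ContinuousLinearMap.sum_apply, ContinuousLinearMap.smul_apply, smul_eq_mul]
  exact Finset.sum_congr rfl fun i _ => by ring

lemma diffx_quadA {n : ℕ} (a : (Fin n → ℝ) → Fin n → Fin n → ℝ)
    (ha : ∀ i j, ContDiff ℝ (⊤ : ℕ∞) (fun x => a x i j)) (x y : Fin n → ℝ) :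
    DifferentiableAt ℝ (fun x' => quadA a x' y) x := by
  apply DifferentiableAt.fun_sum; intro i _
  apply DifferentiableAt.fun_sum; intro j _
  exact (((ha i j).differentiable (by simp) x).mul_const (y i)).mul_const (y j)

lemma diffx_oneform {n : ℕ} (b : (Fin n → ℝ) → Fin n → ℝ)
    (hb : ∀ i, ContDiff ℝ (⊤ : ℕ∞) (fun x => b x i)) (x y : Fin n → ℝ) :
    DifferentiableAt ℝ (fun x' => oneform b x' y) x := by
  apply DifferentiableAt.fun_sum; intro i _
  exact ((hb i).differentiable (by simp) x).mul_const (y i)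

/-! ### Final scalar identity -/

lemma final_id (u v ul vl A0 B0 : ℝ) (hu : 0 < u)
    (h1 : A0 * ul = 0) (h3 : B0 * vl = 0) (h5 : ul * B0 + A0 * vl = 0) :
    co1 u v ul vl * A0 + co3 u v ul vl * B0 = 0 := by
  have hs_pos : 0 < Real.sqrt u := Real.sqrt_pos.mpr hu
  have hsne : Real.sqrt u ≠ 0 := ne_of_gt hs_pos
  have hss : Real.sqrt u * Real.sqrt u = u := Real.mul_self_sqrt hu.le
  simp only [co1, co3]
  rw [show u = Real.sqrt u * Real.sqrt u from hss.symm] at hu ⊢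
  set s := Real.sqrt u
  field_simp
  rw [Real.sqrt_sq hs_pos.le]
  linear_combination (Real.exp (v/s) * 4 * s * (v^2 + s*v - s^2)) * h1
    + (16 * Real.exp (v/s) * s^5) * h3 + (-(8 * Real.exp (v/s) * s^3 * v)) * h5

theorem expRanders_projectively_flat {n : ℕ}
    (a : (Fin n → ℝ) → Fin n → Fin n → ℝ) (b : (Fin n → ℝ) → Fin n → ℝ)
    (ha : ∀ i j, ContDiff ℝ (⊤ : ℕ∞) (fun x => a x i j)) (hsym : ∀ x i j, a x i j = a x j i)
    (hb : ∀ i, ContDiff ℝ (⊤ : ℕ∞) (fun x => b x i))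
    (x0 y0 : Fin n → ℝ) (hA : 0 < quadA a x0 y0)
    (h1 : ∀ l : Fin n, der0 (quadA a) x0 y0 * pdy (quadA a) l x0 y0 = 0)
    (h2 : ∀ l : Fin n, der0l (quadA a) l x0 y0 = pdx (quadA a) l x0 y0)
    (h3 : ∀ l : Fin n, der0 (oneform b) x0 y0 * b x0 l = 0)
    (h4 : ∀ l : Fin n, der0l (oneform b) l x0 y0 = pdx (oneform b) l x0 y0)
    (h5 : ∀ l : Fin n,
      pdy (quadA a) l x0 y0 * der0 (oneform b) x0 y0
        + der0 (quadA a) x0 y0 * b x0 l = 0) :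
    ∀ l : Fin n,
      der0l (fun x y => Real.sqrt (quadA a x y) * Real.exp (oneform b x y / Real.sqrt (quadA a x y)) + oneform b x y) l x0 y0
        - pdx (fun x y => Real.sqrt (quadA a x y) * Real.exp (oneform b x y / Real.sqrt (quadA a x y)) + oneform b x y) l x0 y0 = 0 := by
  intro l
  set F : (Fin n → ℝ) → (Fin n → ℝ) → ℝ :=
    fun x y => Real.sqrt (quadA a x y) * Real.exp (oneform b x y / Real.sqrt (quadA a x y))
      + oneform b x y with hF
  -- Step 1: pointwise formula for `pdx F k` at points where `A > 0`
  have key : ∀ (k : Fin n) (y : Fin n → ℝ), 0 < quadA a x0 y →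
      pdx F k x0 y
        = co2 (quadA a x0 y) (oneform b x0 y) * pdx (quadA a) k x0 y
          + co4 (quadA a x0 y) (oneform b x0 y) * pdx (oneform b) k x0 y := by
    intro k y hy
    exact shape1 (Pi.single k 1) (diffx_quadA a ha x0 y) (diffx_oneform b hb x0 y) hy
  have hopen : IsOpen {y : Fin n → ℝ | 0 < quadA a x0 y} := by
    have hc : Continuous (fun y : Fin n → ℝ => quadA a x0 y) := by
      simp only [quadA]; fun_prop
    exact isOpen_lt continuous_const hc
  have hy0 : y0 ∈ {y : Fin n → ℝ | 0 < quadA a x0 y} := hA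
  -- Step 2: the mixed second derivatives
  have hk : ∀ k : Fin n,
      pdy (pdx F k) l x0 y0
        = co1 (quadA a x0 y0) (oneform b x0 y0) (pdy (quadA a) l x0 y0) (b x0 l)
            * pdx (quadA a) k x0 y0
          + co2 (quadA a x0 y0) (oneform b x0 y0) * pdy (pdx (quadA a) k) l x0 y0
          + co3 (quadA a x0 y0) (oneform b x0 y0) (pdy (quadA a) l x0 y0) (b x0 l)
            * pdx (oneform b) k x0 y0
          + co4 (quadA a x0 y0) (oneform b x0 y0) * pdy (pdx (oneform b) k) l x0 y0 := by
    intro k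
    have heq : (fun y' => pdx F k x0 y') =ᶠ[nhds y0]
        (fun y' => co2 (quadA a x0 y') (oneform b x0 y')
            * (∑ i, ∑ j, (fderiv ℝ (fun x' => a x' i j) x0 (Pi.single k 1)) * y' i * y' j)
          + co4 (quadA a x0 y') (oneform b x0 y')
            * (∑ i, (fderiv ℝ (fun x' => b x' i) x0 (Pi.single k 1)) * y' i)) := by
      filter_upwards [hopen.mem_nhds hy0] with y hy
      rw [key k y hy, pdx_quadA a ha k x0 y, pdx_oneform b hb k x0 y]
    have hdU : DifferentiableAt ℝ (fun y' => quadA a x0 y') y0 := (diff_qpoly (a x0)) y0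
    have hdV : DifferentiableAt ℝ (fun y' => oneform b x0 y') y0 := (diff_lpoly (b x0)) y0
    have hdP : DifferentiableAt ℝ
        (fun y' : Fin n → ℝ => ∑ i, ∑ j,
          (fderiv ℝ (fun x' => a x' i j) x0 (Pi.single k 1)) * y' i * y' j) y0 :=
      (diff_qpoly _) y0
    have hdQ : DifferentiableAt ℝ
        (fun y' : Fin n → ℝ => ∑ i,
          (fderiv ℝ (fun x' => b x' i) x0 (Pi.single k 1)) * y' i) y0 :=
      (diff_lpoly _) y0
    have hsh := shape2 (U := fun y' => quadA a x0 y') (V := fun y' => oneform b x0 y')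
      (P := fun y' : Fin n → ℝ => ∑ i, ∑ j,
          (fderiv ℝ (fun x' => a x' i j) x0 (Pi.single k 1)) * y' i * y' j)
      (Q := fun y' : Fin n → ℝ => ∑ i,
          (fderiv ℝ (fun x' => b x' i) x0 (Pi.single k 1)) * y' i)
      (Pi.single l 1) hdU hdV hdP hdQ hA
    beta_reduce at hsh
    have e1 : fderiv ℝ (fun y' => quadA a x0 y') y0 (Pi.single l 1)
        = pdy (quadA a) l x0 y0 := rfl
    have e2 : fderiv ℝ (fun y' => oneform b x0 y') y0 (Pi.single l 1) = b x0 l :=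
      pdy_oneform b l x0 y0
    have e3 : (∑ i, ∑ j,
        (fderiv ℝ (fun x' => a x' i j) x0 (Pi.single k 1)) * y0 i * y0 j)
        = pdx (quadA a) k x0 y0 := (pdx_quadA a ha k x0 y0).symm
    have e4 : (∑ i, (fderiv ℝ (fun x' => b x' i) x0 (Pi.single k 1)) * y0 i)
        = pdx (oneform b) k x0 y0 := (pdx_oneform b hb k x0 y0).symm
    have e5 : fderiv ℝ (fun y' : Fin n → ℝ => ∑ i, ∑ j,
          (fderiv ℝ (fun x' => a x' i j) x0 (Pi.single k 1)) * y' i * y' j) y0 (Pi.single l 1)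
        = pdy (pdx (quadA a) k) l x0 y0 := by
      have : (fun y' => pdx (quadA a) k x0 y')
          = fun y' : Fin n → ℝ => ∑ i, ∑ j,
              (fderiv ℝ (fun x' => a x' i j) x0 (Pi.single k 1)) * y' i * y' j :=
        funext fun y => pdx_quadA a ha k x0 y
      rw [pdy, this]
    have e6 : fderiv ℝ (fun y' : Fin n → ℝ => ∑ i,
          (fderiv ℝ (fun x' => b x' i) x0 (Pi.single k 1)) * y' i) y0 (Pi.single l 1)
        = pdy (pdx (oneform b) k) l x0 y0 := by
      have : (fun y' => pdx (oneform b) k x0 y')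
          = fun y' : Fin n → ℝ => ∑ i,
              (fderiv ℝ (fun x' => b x' i) x0 (Pi.single k 1)) * y' i :=
        funext fun y => pdx_oneform b hb k x0 y
      rw [pdy, this]
    calc pdy (pdx F k) l x0 y0
        = fderiv ℝ (fun y' => pdx F k x0 y') y0 (Pi.single l 1) := rfl
      _ = _ := by rw [heq.fderiv_eq, hsh, e1, e2, e3, e4, e5, e6]
  -- Step 3: summation
  have hsum : der0l F l x0 y0
      = co1 (quadA a x0 y0) (oneform b x0 y0) (pdy (quadA a) l x0 y0) (b x0 l)
          * der0 (quadA a) x0 y0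
        + co2 (quadA a x0 y0) (oneform b x0 y0) * der0l (quadA a) l x0 y0
        + co3 (quadA a x0 y0) (oneform b x0 y0) (pdy (quadA a) l x0 y0) (b x0 l)
          * der0 (oneform b) x0 y0
        + co4 (quadA a x0 y0) (oneform b x0 y0) * der0l (oneform b) l x0 y0 := by
    simp only [der0l, der0]
    rw [Finset.mul_sum, Finset.mul_sum, Finset.mul_sum, Finset.mul_sum,
      ← Finset.sum_add_distrib, ← Finset.sum_add_distrib, ← Finset.sum_add_distrib]
    exact Finset.sum_congr rfl fun k _ => by rw [hk k]; ring
  have hpdx : pdx F l x0 y0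
      = co2 (quadA a x0 y0) (oneform b x0 y0) * pdx (quadA a) l x0 y0
        + co4 (quadA a x0 y0) (oneform b x0 y0) * pdx (oneform b) l x0 y0 :=
    key l y0 hA
  rw [hsum, hpdx, ← h2 l, ← h4 l]
  linear_combination final_id (quadA a x0 y0) (oneform b x0 y0) (pdy (quadA a) l x0 y0)
    (b x0 l) (der0 (quadA a) x0 y0) (der0 (oneform b) x0 y0) hA (h1 l) (h3 l) (h5 l)
end
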